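/- arXiv:1708.01499 — 4 statements merged into one kernel-verified Lean document; each statement's English description precedes it below -/
import Mathlib

section
/- Let n ≥ 3 be an odd integer, let k ≥ 4, and let a_1, …, a_k be nonzero integers. Then the number R(N) of integer solutions of the equation a_1·x_1^n + … + a_{k−1}·x_{k−1}^n + 2·a_k·x_k = 0 in the hypercube [−N, N]^k satisfies R(N) ≪ N^{k−2+ε}. -/
/-
Fix all but two of the variables carrying an `n`-th power; the last variable then only records
that `a x ^ n + b y ^ n + t` lies in an interval of length `O(N)`, so it suffices to count such
pairs `(x, y)` in `O(N)`. For `|x| ≤ |y|` and fixed `x`, the values `y ^ n` on either sign of `y`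
are spaced at least `|x| ^ (n - 1) ≥ x ^ 2` apart, so each slice has `O(N / x ^ 2 + 1)` points,
and `∑ 1 / x ^ 2` converges. This gives `R(N) ≪ N ^ (k - 2)` without the `ε`.
-/

open Finset

theorem sub_mul_pow_pred_le_pow_sub_pow {R : Type*} [CommRing R] [LinearOrder R]
    [IsStrictOrderedRing R] {y z : R} {n : ℕ} (hn : 1 ≤ n) (hy : 0 ≤ y) (hyz : y ≤ z) :
    (z - y) * y ^ (n - 1) ≤ z ^ n - y ^ n := by
  have bernoulli := pow_add_mul_le_add_pow hy (by linarith : 0 ≤ 2 * y + (z - y)) n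
  rw [add_sub_cancel] at bernoulli
  have : y ^ (n - 1) ≤ n * y ^ (n - 1) :=
    le_mul_of_one_le_left (by positivity) (by exact_mod_cast hn)
  nlinarith [sub_nonneg.mpr hyz]

theorem card_sub_one_mul_pow_pred_le {s : Finset ℤ} {m L : ℤ} {n : ℕ} (hn : 1 ≤ n) (hm : 0 ≤ m)
    (hL : 0 ≤ L) (hs : ∀ y ∈ s, m ≤ y) (hdiam : ∀ y ∈ s, ∀ z ∈ s, z ^ n - y ^ n ≤ L) :
    ((#s : ℤ) - 1) * m ^ (n - 1) ≤ L := by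
  rcases s.eq_empty_or_nonempty with rfl | hne
  · simp only [card_empty, Nat.cast_zero, zero_sub, neg_one_mul, neg_le]
    exact (neg_nonpos.mpr hL).trans (by positivity)
  set y := s.min' hne
  set z := s.max' hne
  have hmy : m ≤ y := hs y (s.min'_mem hne)
  have hyz : y ≤ z := s.min'_le_max' hne
  have hcard : (#s : ℤ) - 1 ≤ z - y := by
    have := card_le_card (fun x hx => mem_Icc.mpr ⟨s.min'_le x hx, s.le_max' x hx⟩ :
      s ⊆ Icc y z)
    rw [Int.card_Icc] at this
    omega
  calc ((#s : ℤ) - 1) * m ^ (n - 1) ≤ (z - y) * y ^ (n - 1) :=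
        mul_le_mul hcard (pow_le_pow_left₀ hm hmy _) (by positivity) (by omega)
    _ ≤ z ^ n - y ^ n := sub_mul_pow_pred_le_pow_sub_pow hn (hm.trans hmy) hyz
    _ ≤ L := hdiam y (s.min'_mem hne) z (s.max'_mem hne)

theorem card_le_div_sq_add_one {s : Finset ℤ} {x L : ℤ} {n : ℕ} (hn : 3 ≤ n) (hx : x ≠ 0)
    (hL : 0 ≤ L) (hs : ∀ y ∈ s, |x| ≤ y) (hdiam : ∀ y ∈ s, ∀ z ∈ s, |z ^ n - y ^ n| ≤ L) :
    (#s : ℝ) ≤ L / x ^ 2 + 1 := by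
  have key := card_sub_one_mul_pow_pred_le (by omega) (abs_nonneg x) hL hs
    fun y hy z hz => (le_abs_self _).trans (hdiam y hy z hz)
  have hsq : x ^ 2 ≤ |x| ^ (n - 1) := by
    rw [← sq_abs]
    exact pow_le_pow_right₀ (Int.one_le_abs hx) (by omega)
  have : ((#s : ℤ) - 1) * x ^ 2 ≤ L := by
    rcases s.eq_empty_or_nonempty with rfl | hne
    · simp only [card_empty, Nat.cast_zero, zero_sub, neg_one_mul, neg_le]
      exact (neg_nonpos.mpr hL).trans (sq_nonneg x)
    · have : (1 : ℤ) ≤ #s := by exact_mod_cast hne.card_pos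
      nlinarith
  rw [← sub_le_iff_le_add, le_div_iff₀ (by positivity)]
  exact_mod_cast this

theorem card_filter_abs_add_mul_pow_le (s : Finset ℤ) {b c x M : ℤ} {n : ℕ} (hn : 3 ≤ n)
    (hb : b ≠ 0) (hx : x ≠ 0) (hM : 0 ≤ M) :
    (#{y ∈ s | |c + b * y ^ n| ≤ M ∧ |x| ≤ |y|} : ℝ) ≤ 4 * M / x ^ 2 + 2 := by
  set T := {y ∈ s | |c + b * y ^ n| ≤ M ∧ |x| ≤ |y|}
  have hdiam : ∀ y ∈ T, ∀ z ∈ T, |z ^ n - y ^ n| ≤ 2 * M := by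
    intro y hy z hz
    have hy := (mem_filter.mp hy).2.1
    have hz := (mem_filter.mp hz).2.1
    have : |b| * |z ^ n - y ^ n| ≤ 2 * M := by
      rw [← abs_mul, show b * (z ^ n - y ^ n) = (c + b * z ^ n) - (c + b * y ^ n) by ring]
      exact (abs_sub _ _).trans (by linarith)
    nlinarith [Int.one_le_abs hb, abs_nonneg (z ^ n - y ^ n)]
  have hpos : (#{y ∈ T | 0 < y} : ℝ) ≤ (2 * M : ℤ) / x ^ 2 + 1 := by
    refine card_le_div_sq_add_one hn hx (by positivity) (fun y hy => ?_)
      (fun y hy z hz => hdiam y (mem_filter.mp hy).1 z (mem_filter.mp hz).1)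
    obtain ⟨hyT, hy0⟩ := mem_filter.mp hy
    simpa [abs_of_pos hy0] using (mem_filter.mp hyT).2.2
  have hneg : (#{y ∈ T | ¬ 0 < y} : ℝ) ≤ (2 * M : ℤ) / x ^ 2 + 1 := by
    rw [← card_image_of_injective _ neg_injective]
    refine card_le_div_sq_add_one hn hx (by positivity) ?_ ?_
    · simp only [mem_image, mem_filter, T]
      rintro _ ⟨y, ⟨⟨-, -, hxy⟩, hy0⟩, rfl⟩
      rwa [abs_of_nonpos (not_lt.mp hy0)] at hxy
    · simp only [mem_image, mem_filter]
      rintro _ ⟨y, ⟨hy, -⟩, rfl⟩ _ ⟨z, ⟨hz, -⟩, rfl⟩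
      rw [neg_pow y, neg_pow z, ← mul_sub, abs_mul, abs_pow, abs_neg, abs_one, one_pow, one_mul]
      exact hdiam y hy z hz
  rw [← card_filter_add_card_filter_not (fun y => 0 < y), Nat.cast_add]
  have : (4 * M : ℝ) / x ^ 2 = 2 * ((2 * M : ℤ) / x ^ 2) := by push_cast; ring
  linarith

theorem Finset.card_filter_product {α β : Type*} (s : Finset α) (t : Finset β)
    (P : α × β → Prop) [DecidablePred P] :
    #{p ∈ s ×ˢ t | P p} = ∑ x ∈ s, #{y ∈ t | P (x, y)} := by
  simp only [card_filter, sum_product]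

theorem sum_one_div_sq_le_tsum (s : Finset ℤ) :
    ∑ x ∈ s, 1 / (x : ℝ) ^ 2 ≤ ∑' x : ℤ, 1 / (x : ℝ) ^ 2 :=
  (Real.summable_one_div_int_pow.mpr one_lt_two).sum_le_tsum s fun _ _ => by positivity

theorem card_filter_product_abs_le_of_abs_le_abs (s : Finset ℤ) (a : ℤ) {b t M : ℤ} {n : ℕ}
    (hn : 3 ≤ n) (hb : b ≠ 0) (hM : 0 ≤ M) :
    (#{p ∈ s ×ˢ s | |a * p.1 ^ n + b * p.2 ^ n + t| ≤ M ∧ |p.1| ≤ |p.2|} : ℝ) ≤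
      4 * M * ∑' x : ℤ, 1 / (x : ℝ) ^ 2 + 3 * #s := by
  have hslice : ∀ x ∈ s, (#{y ∈ s | |a * x ^ n + b * y ^ n + t| ≤ M ∧ |x| ≤ |y|} : ℝ) ≤
      4 * M * (1 / (x : ℝ) ^ 2) + 2 + if x = 0 then (#s : ℝ) else 0 := by
    intro x _
    rcases eq_or_ne x 0 with rfl | hx
    · have : (#{y ∈ s | |a * 0 ^ n + b * y ^ n + t| ≤ M ∧ |(0 : ℤ)| ≤ |y|} : ℝ) ≤ #s := by
        exact_mod_cast card_filter_le _ _
      rw [if_pos rfl, Int.cast_zero, zero_pow two_ne_zero, div_zero, mul_zero, zero_add]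
      linarith
    · simp only [add_comm _ t, ← add_assoc]
      have := card_filter_abs_add_mul_pow_le s (c := t + a * x ^ n) hn hb hx hM
      rw [if_neg hx, add_zero, mul_one_div]
      exact this
  rw [card_filter_product]
  push_cast
  refine (sum_le_sum hslice).trans ?_
  rw [sum_add_distrib, sum_add_distrib, ← mul_sum, sum_const, sum_ite_eq', nsmul_eq_mul]
  have hZ := mul_le_mul_of_nonneg_left (sum_one_div_sq_le_tsum s)
    (show (0 : ℝ) ≤ 4 * M by positivity)
  have : (if (0 : ℤ) ∈ s then (#s : ℝ) else 0) ≤ #s := by split_ifs <;> simp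
  linarith

theorem card_filter_product_abs_le (s : Finset ℤ) {a b t M : ℤ} {n : ℕ} (hn : 3 ≤ n)
    (ha : a ≠ 0) (hb : b ≠ 0) (hM : 0 ≤ M) :
    (#{p ∈ s ×ˢ s | |a * p.1 ^ n + b * p.2 ^ n + t| ≤ M} : ℝ) ≤
      2 * (4 * M * ∑' x : ℤ, 1 / (x : ℝ) ^ 2 + 3 * #s) := by
  have hswap : #{p ∈ {p ∈ s ×ˢ s | |a * p.1 ^ n + b * p.2 ^ n + t| ≤ M} | ¬ |p.1| ≤ |p.2|} ≤
      #{p ∈ s ×ˢ s | |b * p.1 ^ n + a * p.2 ^ n + t| ≤ M ∧ |p.1| ≤ |p.2|} := by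
    refine card_le_card_of_injOn Prod.swap (fun p hp => ?_) Prod.swap_injective.injOn
    simp only [coe_filter, mem_filter, mem_product, Set.mem_ofPred_eq] at hp ⊢
    obtain ⟨⟨⟨hp1, hp2⟩, hpM⟩, hlt⟩ := hp
    exact ⟨⟨hp2, hp1⟩, by rwa [add_comm (b * _)], (not_le.mp hlt).le⟩
  rw [← card_filter_add_card_filter_not (fun p : ℤ × ℤ => |p.1| ≤ |p.2|), filter_filter,
    Nat.cast_add]
  have h1 := card_filter_product_abs_le_of_abs_le_abs s a hn hb hM (t := t)
  have h2 := card_filter_product_abs_le_of_abs_le_abs s b hn ha hM (t := t)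
  have h3 : (_ : ℝ) ≤ _ := Nat.cast_le.mpr hswap
  linarith

theorem card_filter_piFinset_abs_le (s : Finset ℤ) {M : ℤ} {n : ℕ} (hn : 3 ≤ n) (hM : 0 ≤ M)
    (j : ℕ) {c : Fin (j + 2) → ℤ} (hc : ∀ i, c i ≠ 0) (t : ℤ) :
    (#{y ∈ Fintype.piFinset fun _ => s | |∑ i, c i * y i ^ n + t| ≤ M} : ℝ) ≤
      2 * (4 * M * ∑' x : ℤ, 1 / (x : ℝ) ^ 2 + 3 * #s) * #s ^ j := by
  induction j generalizing t with
  | zero =>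
    rw [pow_zero, mul_one]
    refine le_trans ?_ (card_filter_product_abs_le s hn (hc 0) (hc 1) hM (t := t))
    refine Nat.cast_le.mpr (card_le_card_of_injOn (fun y => (y 0, y 1)) (fun y hy => ?_) ?_)
    · simp only [coe_filter, Fintype.mem_piFinset, mem_product, Set.mem_ofPred_eq] at hy ⊢
      rw [Fin.sum_univ_two] at hy
      exact ⟨⟨hy.1 0, hy.1 1⟩, hy.2⟩
    · intro y _ z _ hyz
      simp only [Prod.mk.injEq] at hyz
      funext i
      fin_cases i
      exacts [hyz.1, hyz.2]
  | succ j ih =>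
    set B : ℝ := 2 * (4 * M * ∑' x : ℤ, 1 / (x : ℝ) ^ 2 + 3 * #s)
    set S : Finset (Fin (j + 1 + 2) → ℤ) :=
      {y ∈ Fintype.piFinset fun _ => s | |∑ i, c i * y i ^ n + t| ≤ M}
    have hfibre : ∀ w ∈ s, (#{y ∈ S | y 0 = w} : ℝ) ≤ B * #s ^ j := by
      intro w _
      refine le_trans (Nat.cast_le.mpr ?_) (ih (c := fun i => c i.succ) (fun i => hc _)
        (t + c 0 * w ^ n))
      refine card_le_card_of_injOn Fin.tail (fun y hy => ?_) (fun y hy z hz hyz => ?_)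
      · simp only [S, coe_filter, mem_filter, Fintype.mem_piFinset, Set.mem_ofPred_eq] at hy ⊢
        obtain ⟨⟨hys, hyM⟩, rfl⟩ := hy
        refine ⟨fun i => hys i.succ, ?_⟩
        rw [Fin.sum_univ_succ] at hyM
        rwa [add_comm t, ← add_assoc, add_comm _ (c 0 * _)]
      · simp only [S, coe_filter, mem_filter, Set.mem_ofPred_eq] at hy hz
        funext i
        exact Fin.cases (hy.2.trans hz.2.symm) (congrFun hyz) i
    have hmaps : Set.MapsTo (fun y : Fin (j + 1 + 2) → ℤ => y 0) S s := fun y hy =>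
      Fintype.mem_piFinset.mp (mem_filter.mp hy).1 0
    calc (#S : ℝ) = ∑ w ∈ s, (#{y ∈ S | y 0 = w} : ℝ) := by
          exact_mod_cast card_eq_sum_card_fiberwise hmaps
      _ ≤ ∑ _w ∈ s, B * #s ^ j := sum_le_sum hfibre
      _ = B * #s ^ (j + 1) := by rw [sum_const, nsmul_eq_mul]; ring

theorem ncard_solutions_le_card_filter_piFinset {k n : ℕ} {a : Fin (k + 1) → ℤ}
    (ha : a (Fin.last k) ≠ 0) (N : ℕ) :
    Set.ncard {x : Fin (k + 1) → ℤ | (∀ i, |x i| ≤ (N : ℤ)) ∧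
        (∑ i : Fin k, a i.castSucc * x i.castSucc ^ n) + 2 * a (Fin.last k) * x (Fin.last k) = 0}
      ≤ #{y ∈ Fintype.piFinset fun _ => Icc (-(N : ℤ)) N |
          |∑ i : Fin k, a i.castSucc * y i ^ n| ≤ 2 * |a (Fin.last k)| * N} := by
  rw [← Set.ncard_coe_finset]
  refine Set.ncard_le_ncard_of_injOn Fin.init (fun x hx => ?_) (fun x hx y hy hxy => ?_)
    (finite_toSet _)
  · obtain ⟨hxN, hx0⟩ := hx
    simp only [coe_filter, Fintype.mem_piFinset, mem_Icc, Set.mem_ofPred_eq]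
    refine ⟨fun i => abs_le.mp (hxN _), ?_⟩
    change |∑ i : Fin k, a i.castSucc * x i.castSucc ^ n| ≤ _
    rw [eq_neg_of_add_eq_zero_left hx0, abs_neg, abs_mul, abs_mul, abs_two]
    exact mul_le_mul_of_nonneg_left (hxN _) (by positivity)
  · have hsum : ∑ i : Fin k, a i.castSucc * x i.castSucc ^ n =
        ∑ i : Fin k, a i.castSucc * y i.castSucc ^ n := by
      refine sum_congr rfl fun i _ => ?_
      rw [show x i.castSucc = y i.castSucc from congrFun hxy i]
    have hlast : x (Fin.last k) = y (Fin.last k) := by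
      have := hx.2.trans hy.2.symm
      rw [hsum, add_right_inj] at this
      exact mul_left_cancel₀ (mul_ne_zero two_ne_zero ha) this
    funext i
    exact Fin.lastCases hlast (congrFun hxy) i

theorem card_Icc_neg_self (N : ℕ) : #(Icc (-(N : ℤ)) N) = 2 * N + 1 := by
  rw [Int.card_Icc]
  omega

theorem stmt_2_general (n k : ℕ) (hn : 3 ≤ n) (hk : 3 ≤ k)
    (a : Fin (k + 1) → ℤ) (ha : ∀ i, a i ≠ 0) :
    ∀ ε : ℝ, 0 < ε → ∃ C : ℝ, 0 < C ∧ ∀ N : ℕ, 1 ≤ N →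
      (Set.ncard {x : Fin (k + 1) → ℤ |
          (∀ i, |x i| ≤ (N : ℤ)) ∧
          (∑ i : Fin k, a i.castSucc * x i.castSucc ^ n) +
            2 * a (Fin.last k) * x (Fin.last k) = 0} : ℝ)
        ≤ C * (N : ℝ) ^ (((k : ℝ) + 1) - 2 + ε) := by
  intro ε hε
  obtain ⟨j, rfl⟩ : ∃ j, k = j + 2 := ⟨k - 2, by omega⟩
  set Z := ∑' x : ℤ, 1 / (x : ℝ) ^ 2
  set b := |a (Fin.last (j + 2))|
  refine ⟨2 * (8 * Z * b + 9) * 3 ^ j, by positivity, fun N hN => ?_⟩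
  have hbox := card_filter_piFinset_abs_le (Icc (-(N : ℤ)) N) hn (M := 2 * b * N)
    (by positivity) j (fun i => ha i.castSucc) 0
  simp only [add_zero, card_Icc_neg_self] at hbox
  have hN1 : (1 : ℝ) ≤ N := by exact_mod_cast hN
  calc _ ≤ _ := Nat.cast_le.mpr (ncard_solutions_le_card_filter_piFinset (ha _) N)
    _ ≤ _ := hbox
    _ ≤ 2 * (8 * Z * b + 9) * N * (3 ^ j * (N : ℝ) ^ j) := by
      push_cast
      have hpow : (2 * N + 1 : ℝ) ^ j ≤ 3 ^ j * (N : ℝ) ^ j := by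
        rw [← mul_pow]
        exact pow_le_pow_left₀ (by positivity) (by linarith) j
      refine mul_le_mul ?_ hpow (by positivity) (by positivity)
      nlinarith
    _ = 2 * (8 * Z * b + 9) * 3 ^ j * (N : ℝ) ^ ((j + 1 : ℕ) : ℝ) := by
      rw [Real.rpow_natCast]
      ring
    _ ≤ _ := by
      gcongr
      push_cast
      linarith

/-- Let `n ≥ 3` be odd, let the total number of variables be `k + 1 ≥ 4`, and let all
coefficients be nonzero integers.  Then the number of integer solutions of
`a_1 x_1^n + … + a_k x_k^n + 2 a_{k+1} x_{k+1} = 0` in the hypercube `[-N, N]^(k+1)`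
is `≪ N ^ ((k+1) - 2 + ε)`. -/
theorem stmt_2 (n k : ℕ) (hn : 3 ≤ n) (hnodd : Odd n) (hk : 3 ≤ k)
    (a : Fin (k + 1) → ℤ) (ha : ∀ i, a i ≠ 0) :
    ∀ ε : ℝ, 0 < ε → ∃ C : ℝ, 0 < C ∧ ∀ N : ℕ, 1 ≤ N →
      (Set.ncard {x : Fin (k + 1) → ℤ |
          (∀ i, |x i| ≤ (N : ℤ)) ∧
          (∑ i : Fin k, a i.castSucc * x i.castSucc ^ n) +
            2 * a (Fin.last k) * x (Fin.last k) = 0} : ℝ)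
        ≤ C * (N : ℝ) ^ (((k : ℝ) + 1) - 2 + ε) :=
  stmt_2_general n k hn hk a ha
end

section
/- The number R(N) of integer solutions of the equation x_1^3 + x_2^3 + x_3^3 − 1 = 0 in the cube [−N, N]^3 satisfies R(N) ≪ N^{1+ε}. -/
/-!
Fix `z = x 2`. For `z = 1` the solutions are the `2N + 1` points `(t, -t, 1)`. For `z ≠ 1` the
integer `m = 1 - z ^ 3` is nonzero with `|m| ≤ 2N ^ 3`, and `(x 0, x 1)` solves `u ^ 3 + v ^ 3 = m`.
Then `s = u + v` is a divisor of `m`, and `3 s u v = s ^ 3 - m` shows that `s` determines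
`{u, v}`, so there are `≪ d(|m|) ≪ N ^ ε` such pairs by the divisor bound `d(n) ≪ n ^ ε`.
Summing over the `2N + 1` values of `z` gives `≪ N ^ (1 + ε)`.
-/

open Finset Real

lemma exists_add_one_le_mul_pow {r : ℝ} (hr : 1 < r) :
    ∃ C : ℝ, 1 ≤ C ∧ ∀ a : ℕ, (a + 1 : ℝ) ≤ C * r ^ a := by
  have hr₁ : 0 < r - 1 := by linarith
  have hC : 1 ≤ r / (r - 1) := by rw [le_div_iff₀ hr₁]; linarith
  refine ⟨r / (r - 1), hC, fun a => ?_⟩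
  have bernoulli : 1 + a * (r - 1) ≤ r ^ a := by
    simpa using one_add_mul_le_pow (a := r - 1) (by linarith) a
  calc (a + 1 : ℝ) ≤ r / (r - 1) + a * r := by nlinarith [(Nat.cast_nonneg a : (0 : ℝ) ≤ a)]
    _ = r / (r - 1) * (1 + a * (r - 1)) := by field_simp
    _ ≤ r / (r - 1) * r ^ a := by gcongr

lemma add_one_le_rpow_pow {p ε : ℝ} (hp : 0 ≤ p) (h2 : 2 ≤ p ^ ε) (a : ℕ) :
    (a + 1 : ℝ) ≤ (p ^ a) ^ ε := by
  calc (a + 1 : ℝ) ≤ 2 ^ a := by exact_mod_cast Nat.lt_two_pow_self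
    _ ≤ (p ^ ε) ^ a := by gcongr
    _ = (p ^ a) ^ ε := rpow_pow_comm hp ε a

lemma add_one_le_mul_rpow_pow {p ε C : ℝ} (hp : 2 ≤ p) (hε : 0 ≤ ε)
    (hC : ∀ a : ℕ, (a + 1 : ℝ) ≤ C * ((2 : ℝ) ^ ε) ^ a) (a : ℕ) :
    (a + 1 : ℝ) ≤ C * (p ^ a) ^ ε := by
  have hC₀ : 0 ≤ C := by nlinarith [hC 0]
  calc (a + 1 : ℝ) ≤ C * ((2 : ℝ) ^ ε) ^ a := hC a
    _ ≤ C * (p ^ ε) ^ a := by gcongr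
    _ = C * (p ^ a) ^ ε := by rw [rpow_pow_comm (by linarith) ε a]

theorem Nat.card_divisors_le_mul_rpow {ε : ℝ} (hε : 0 < ε) :
    ∃ C : ℝ, 0 < C ∧ ∀ n : ℕ, n ≠ 0 → (#n.divisors : ℝ) ≤ C * (n : ℝ) ^ ε := by
  obtain ⟨C₀, hC₀, hC₀_bound⟩ :=
    exists_add_one_le_mul_pow (one_lt_rpow (by norm_num : (1 : ℝ) < 2) hε)
  -- Primes `p ≥ K` satisfy `p ^ ε ≥ 2`, so only the primes below `K` contribute a factor `C₀`.
  set K : ℕ := ⌈(2 : ℝ) ^ ε⁻¹⌉₊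
  let c : ℕ → ℝ := fun p => if p < K then C₀ else 1
  have hfactor : ∀ p : ℕ, p.Prime → ∀ a : ℕ, (a + 1 : ℝ) ≤ c p * ((p : ℝ) ^ a) ^ ε := by
    intro p hp a
    have hp₂ : (2 : ℝ) ≤ p := by exact_mod_cast hp.two_le
    by_cases hpK : p < K
    · simpa [c, hpK] using add_one_le_mul_rpow_pow hp₂ hε.le hC₀_bound a
    · have hKp : (2 : ℝ) ^ ε⁻¹ ≤ p := (Nat.le_ceil _).trans (by exact_mod_cast not_lt.mp hpK)
      have h2 : (2 : ℝ) ≤ (p : ℝ) ^ ε := by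
        simpa [← rpow_mul, hε.ne'] using rpow_le_rpow (by positivity) hKp hε.le
      simpa [c, hpK] using add_one_le_rpow_pow (by positivity) h2 a
  refine ⟨C₀ ^ K, by positivity, fun n hn => ?_⟩
  calc (#n.divisors : ℝ) = ∏ p ∈ n.primeFactors, ((n.factorization p : ℝ) + 1) := by
        rw [Nat.card_divisors hn]; push_cast; rfl
    _ ≤ ∏ p ∈ n.primeFactors, c p * ((p : ℝ) ^ n.factorization p) ^ ε :=
        prod_le_prod (fun p _ => by positivity)
          fun p hp => hfactor p (Nat.prime_of_mem_primeFactors hp) _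
    _ = (∏ p ∈ n.primeFactors, c p) * (n : ℝ) ^ ε := by
        rw [prod_mul_distrib, finsetProd_rpow _ _ (fun p _ => by positivity)]
        congr 2
        exact_mod_cast (Nat.prod_primeFactors_pow_factorization hn).symm
    _ ≤ C₀ ^ K * (n : ℝ) ^ ε := by
        gcongr
        rw [prod_ite, prod_const, prod_const, one_pow, mul_one]
        refine pow_le_pow_right₀ hC₀ ((card_le_card fun p hp => ?_).trans (card_range K).le)
        simp_all

lemma Int.card_divisors (z : ℤ) : #z.divisors = 2 * #z.natAbs.divisors := by
  rw [Int.divisors, card_disjUnion, card_map, card_map, two_mul]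

lemma eq_and_eq_or_eq_and_eq_of_add_eq_of_cube_add_eq {R : Type*} [CommRing R] [IsDomain R]
    (h3 : (3 : R) ≠ 0) {a b c d : R} (hsum : a + b = c + d) (hcube : a ^ 3 + b ^ 3 = c ^ 3 + d ^ 3)
    (hne : a + b ≠ 0) : a = c ∧ b = d ∨ a = d ∧ b = c := by
  -- `3 (a + b) a b = (a + b) ^ 3 - (a ^ 3 + b ^ 3)` recovers the product from the two sums.
  have hprod : a * b = c * d := by
    refine mul_left_cancel₀ (mul_ne_zero h3 hne) ?_
    linear_combination ((a + b) ^ 2 + (a + b) * (c + d) + (c + d) ^ 2 - 3 * c * d) * hsum - hcube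
  have hroot : (a - c) * (a - d) = 0 := by linear_combination a * hsum - hprod
  rcases mul_eq_zero.mp hroot with h | h
  · exact .inl ⟨by linear_combination h, by linear_combination hsum - h⟩
  · exact .inr ⟨by linear_combination h, by linear_combination hsum - h⟩

lemma card_le_two_mul_card_divisors_of_cube_add_cube_eq {m : ℤ} (hm : m ≠ 0)
    {S : Finset (ℤ × ℤ)} (hS : ∀ p ∈ S, p.1 ^ 3 + p.2 ^ 3 = m) : #S ≤ 2 * #m.divisors := by
  classical
  refine card_le_mul_card_image_of_maps_to (f := fun p => p.1 + p.2) (fun p hp => ?_) 2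
    fun s hs => ?_
  · exact Int.mem_divisors.mpr ⟨hS p hp ▸ Odd.add_dvd_pow_add_pow _ _ (by decide), hm⟩
  · have hs₀ : s ≠ 0 := by rintro rfl; simp_all
    rcases (S.filter fun p => p.1 + p.2 = s).eq_empty_or_nonempty with h | ⟨p₀, hp₀⟩
    · simp [h]
    refine (card_le_card fun p hp => ?_).trans (card_le_two (a := p₀) (b := p₀.swap))
    rw [mem_filter] at hp hp₀
    rcases eq_and_eq_or_eq_and_eq_of_add_eq_of_cube_add_eq (by norm_num) (hp.2.trans hp₀.2.symm)
      ((hS p hp.1).trans (hS p₀ hp₀.1).symm) (hp.2 ▸ hs₀) with ⟨h₁, h₂⟩ | ⟨h₁, h₂⟩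
    · simp [Prod.ext h₁ h₂]
    · simp [Prod.ext_iff, h₁, h₂]

lemma Int.card_divisors_le_mul_rpow {ε : ℝ} (hε : 0 < ε) :
    ∃ C : ℝ, 0 < C ∧ ∀ m : ℤ, m ≠ 0 → (#m.divisors : ℝ) ≤ C * |(m : ℝ)| ^ ε := by
  obtain ⟨C, hC, hbound⟩ := Nat.card_divisors_le_mul_rpow hε
  refine ⟨2 * C, by positivity, fun m hm => ?_⟩
  rw [Int.card_divisors, Nat.cast_mul, Nat.cast_two, mul_assoc, ← Int.cast_abs, Int.abs_eq_natAbs,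
    Int.cast_natCast]
  exact mul_le_mul_of_nonneg_left (hbound _ (Int.natAbs_ne_zero.mpr hm)) zero_le_two

lemma one_sub_cube_ne_zero {z : ℤ} (hz : z ≠ 1) : 1 - z ^ 3 ≠ 0 :=
  fun h => hz <| (Odd.pow_inj (n := 3) (by decide)).mp (by linear_combination -h)

noncomputable def cubeSolutionsInBox (N : ℕ) : Finset (Fin 3 → ℤ) :=
  {x ∈ Fintype.piFinset fun _ => Icc (-(N : ℤ)) N | x 0 ^ 3 + x 1 ^ 3 + x 2 ^ 3 - 1 = 0}

lemma mem_cubeSolutionsInBox {N : ℕ} {x : Fin 3 → ℤ} :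
    x ∈ cubeSolutionsInBox N ↔ (∀ i, |x i| ≤ N) ∧ x 0 ^ 3 + x 1 ^ 3 + x 2 ^ 3 - 1 = 0 := by
  simp [cubeSolutionsInBox, abs_le]

lemma coe_cubeSolutionsInBox (N : ℕ) :
    (cubeSolutionsInBox N : Set (Fin 3 → ℤ)) =
      {x | (∀ i, |x i| ≤ (N : ℤ)) ∧ x 0 ^ 3 + x 1 ^ 3 + x 2 ^ 3 - 1 = 0} := by
  ext x
  exact mem_cubeSolutionsInBox

lemma card_filter_cubeSolutionsInBox_eq_one_le (N : ℕ) :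
    #{x ∈ cubeSolutionsInBox N | x 2 = 1} ≤ 2 * N + 1 := by
  have hcard : #(Icc (-(N : ℤ)) N) = 2 * N + 1 := by rw [Int.card_Icc]; omega
  refine hcard ▸ card_le_card_of_injOn (· 0) (fun x hx => ?_) fun x hx y hy hxy => ?_
  · simp only [coe_filter, Set.mem_ofPred_eq, mem_cubeSolutionsInBox] at hx
    simpa [abs_le] using hx.1.1 0
  · simp only [coe_filter, Set.mem_ofPred_eq, mem_cubeSolutionsInBox] at hx hy
    have hneg : ∀ x : Fin 3 → ℤ, x 0 ^ 3 + x 1 ^ 3 + x 2 ^ 3 - 1 = 0 → x 2 = 1 → x 1 = -x 0 :=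
      fun x hx h2 => (Odd.pow_inj (n := 3) (by decide)).mp <| by
        rw [h2] at hx
        linear_combination hx
    funext i
    fin_cases i
    · exact hxy
    · simp [hneg x hx.1.2 hx.2, hneg y hy.1.2 hy.2, show x 0 = y 0 from hxy]
    · simp [hx.2, hy.2]

lemma card_filter_cubeSolutionsInBox_eq_le_of_ne_one {N : ℕ} {z : ℤ} (hz : z ≠ 1) :
    #{x ∈ cubeSolutionsInBox N | x 2 = z} ≤ 2 * #(1 - z ^ 3).divisors := by
  classical
  have hinj : Set.InjOn (fun x : Fin 3 → ℤ => (x 0, x 1))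
      ({x ∈ cubeSolutionsInBox N | x 2 = z} : Finset _) := by
    intro x hx y hy hxy
    simp only [coe_filter, Set.mem_ofPred_eq, Prod.mk.injEq] at hx hy hxy
    funext i
    fin_cases i
    exacts [hxy.1, hxy.2, hx.2.trans hy.2.symm]
  rw [← card_image_of_injOn hinj]
  refine card_le_two_mul_card_divisors_of_cube_add_cube_eq (one_sub_cube_ne_zero hz) fun p hp => ?_
  obtain ⟨x, hx, rfl⟩ := mem_image.mp hp
  rw [mem_filter, mem_cubeSolutionsInBox] at hx
  rw [← hx.2]
  linear_combination hx.1.2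

lemma card_cubeSolutionsInBox_le (N : ℕ) :
    #(cubeSolutionsInBox N) ≤
      2 * N + 1 + ∑ z ∈ (Icc (-(N : ℤ)) N).erase 1, 2 * #(1 - z ^ 3).divisors := by
  classical
  have hmaps : ∀ x ∈ cubeSolutionsInBox N, x 2 ∈ Icc (-(N : ℤ)) N := fun x hx => by
    simpa [abs_le] using (mem_cubeSolutionsInBox.mp hx).1 2
  rw [card_eq_sum_card_fiberwise hmaps]
  by_cases h₁ : (1 : ℤ) ∈ Icc (-(N : ℤ)) N
  · rw [← add_sum_erase _ _ h₁]
    gcongr with z hz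
    · exact card_filter_cubeSolutionsInBox_eq_one_le N
    · exact card_filter_cubeSolutionsInBox_eq_le_of_ne_one (ne_of_mem_erase hz)
  · rw [erase_eq_of_notMem h₁]
    exact le_add_left (sum_le_sum fun z hz => card_filter_cubeSolutionsInBox_eq_le_of_ne_one
      fun h => h₁ (h ▸ hz))

lemma exists_card_divisors_one_sub_cube_le {ε : ℝ} (hε : 0 < ε) :
    ∃ C : ℝ, 0 < C ∧ ∀ N : ℕ, 1 ≤ N → ∀ z ∈ Icc (-(N : ℤ)) N, z ≠ 1 →
      (#(1 - z ^ 3).divisors : ℝ) ≤ C * (N : ℝ) ^ ε := by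
  obtain ⟨C, hC, hbound⟩ := Int.card_divisors_le_mul_rpow (ε := ε / 3) (by positivity)
  refine ⟨C * 2 ^ (ε / 3), by positivity, fun N hN z hz hz₁ => ?_⟩
  have hN₁ : (1 : ℝ) ≤ N := by exact_mod_cast hN
  have hz' : |(z : ℝ)| ≤ N := by
    rw [mem_Icc] at hz
    exact abs_le.mpr ⟨by exact_mod_cast hz.1, by exact_mod_cast hz.2⟩
  have habs : |((1 - z ^ 3 : ℤ) : ℝ)| ≤ 2 * (N : ℝ) ^ 3 := by
    push_cast
    have hcube := pow_le_pow_left₀ (abs_nonneg _) hz' 3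
    have hN₃ : (1 : ℝ) ≤ N ^ 3 := one_le_pow₀ hN₁
    calc |1 - (z : ℝ) ^ 3| ≤ |1| + |(z : ℝ) ^ 3| := abs_sub _ _
      _ = 1 + |(z : ℝ)| ^ 3 := by rw [abs_one, abs_pow]
      _ ≤ 2 * (N : ℝ) ^ 3 := by linarith
  refine (hbound _ (one_sub_cube_ne_zero hz₁)).trans ?_
  calc C * |((1 - z ^ 3 : ℤ) : ℝ)| ^ (ε / 3) ≤ C * (2 * (N : ℝ) ^ 3) ^ (ε / 3) := by gcongr
    _ = C * 2 ^ (ε / 3) * (N : ℝ) ^ ε := by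
        rw [mul_rpow (by norm_num) (by positivity), ← rpow_natCast_mul (by positivity)]
        ring_nf

/-- The number of integer solutions of `x_1^3 + x_2^3 + x_3^3 - 1 = 0` in the cube
`[-N, N]^3` is `≪ N ^ (1 + ε)`. -/
theorem stmt_5 :
    ∀ ε : ℝ, 0 < ε → ∃ C : ℝ, 0 < C ∧ ∀ N : ℕ, 1 ≤ N →
      (Set.ncard {x : Fin 3 → ℤ |
          (∀ i, |x i| ≤ (N : ℤ)) ∧ x 0 ^ 3 + x 1 ^ 3 + x 2 ^ 3 - 1 = 0} : ℝ)
        ≤ C * (N : ℝ) ^ ((1 : ℝ) + ε) := by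
  intro ε hε
  obtain ⟨C, hC, hdivisors⟩ := exists_card_divisors_one_sub_cube_le hε
  refine ⟨3 + 6 * C, by positivity, fun N hN => ?_⟩
  have hN₁ : (1 : ℝ) ≤ N := by exact_mod_cast hN
  have hbox : (#((Icc (-(N : ℤ)) N).erase 1) : ℝ) ≤ 3 * N := by
    have hcard : #((Icc (-(N : ℤ)) N).erase 1) ≤ 2 * N + 1 :=
      card_erase_le.trans (by rw [Int.card_Icc]; omega)
    calc (#((Icc (-(N : ℤ)) N).erase 1) : ℝ) ≤ 2 * N + 1 := by exact_mod_cast hcard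
      _ ≤ 3 * N := by linarith
  rw [← coe_cubeSolutionsInBox, Set.ncard_coe_finset]
  calc (#(cubeSolutionsInBox N) : ℝ)
      ≤ 2 * N + 1 + ∑ z ∈ (Icc (-(N : ℤ)) N).erase 1, 2 * (#(1 - z ^ 3).divisors : ℝ) := by
        exact_mod_cast card_cubeSolutionsInBox_le N
    _ ≤ 3 * N + 3 * N * (2 * (C * (N : ℝ) ^ ε)) := by
        gcongr ?_ + ?_
        · linarith
        · refine (sum_le_card_nsmul _ _ (2 * (C * (N : ℝ) ^ ε)) fun z hz => ?_).trans ?_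
          · exact mul_le_mul_of_nonneg_left (hdivisors N hN z (mem_of_mem_erase hz)
              (ne_of_mem_erase hz)) zero_le_two
          · rw [nsmul_eq_mul]
            gcongr
    _ ≤ (3 + 6 * C) * (N : ℝ) ^ ((1 : ℝ) + ε) := by
        rw [rpow_add (by positivity), rpow_one]
        nlinarith [one_le_rpow hN₁ hε.le]
end

section
/- (Corollary 2, second order) Let f be a polynomial of degree 2 in k variables with integer coefficients. Suppose there exist an invertible k×k matrix C over ℚ, an integer vector c ∈ ℤ^k, and rationals a'_1, …, a'_k such that f(C·x + c) = a'_1·x_1^2 + … + a'_k·x_k^2 + a'_0 for all x, where a'_0 is an integer. Then there exist a k×k integer matrix D with nonzero determinant and integers b_1, …, b_k, b_0 such that f(D·x + c) = b_1·x_1^2 + … + b_k·x_k^2 + b_0 for all x ∈ ℤ^k. -/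
lemma clear_den {n : ℤ} (q : ℚ) (h : (q.den : ℤ) ∣ n) :
    ((n / (q.den : ℤ) * q.num : ℤ) : ℚ) = (n : ℚ) * q := by
  obtain ⟨m, rfl⟩ := h
  rw [Int.mul_ediv_cancel_left _ (by exact_mod_cast q.den_nz)]
  push_cast
  rw [mul_comm ((q.den : ℚ)) (m : ℚ), mul_assoc, Rat.den_mul_eq_num]

lemma cast_eval (k : ℕ) (f : MvPolynomial (Fin k) ℤ) (g : Fin k → ℤ) :
    ((MvPolynomial.eval g f : ℤ) : ℚ)
      = MvPolynomial.aeval (fun i => (g i : ℚ)) f := by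
  rw [MvPolynomial.aeval_def, MvPolynomial.eval, MvPolynomial.coe_eval₂Hom]
  rw [show ((MvPolynomial.eval₂ (RingHom.id ℤ) g f : ℤ) : ℚ)
      = (Int.castRingHom ℚ) (MvPolynomial.eval₂ (RingHom.id ℤ) g f) from rfl,
    MvPolynomial.eval₂_comp_left (Int.castRingHom ℚ) (RingHom.id ℤ) g f]
  congr 1

/-- (Corollary 2, second order) Let `f` be a degree-2 integer polynomial in `k` variables.
If some rational affine change of variables `x ↦ C x + c` (with `C` invertible over `ℚ`
and `c` an integer vector) brings `f` to the diagonal form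
`a'_1 x_1^2 + … + a'_k x_k^2 + a'_0` with rational `a'_i` and integer constant term `a'_0`,
then there is an integer matrix `D` with nonzero determinant and integers `b_1, …, b_k, b_0`
such that `f (D x + c) = b_1 x_1^2 + … + b_k x_k^2 + b_0` for all `x ∈ ℤ^k`. -/
theorem stmt_9 (k : ℕ) (f : MvPolynomial (Fin k) ℤ) (hdeg : f.totalDegree = 2)
    (C : Matrix (Fin k) (Fin k) ℚ) (hC : C.det ≠ 0) (c : Fin k → ℤ)
    (a' : Fin k → ℚ) (a0 : ℤ)
    (hf : ∀ x : Fin k → ℚ,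
      MvPolynomial.aeval (fun i => C.mulVec x i + (c i : ℚ)) f
        = (∑ i, a' i * x i ^ 2) + (a0 : ℚ)) :
    ∃ (D : Matrix (Fin k) (Fin k) ℤ) (b : Fin k → ℤ) (b0 : ℤ),
      D.det ≠ 0 ∧ ∀ x : Fin k → ℤ,
        MvPolynomial.eval (fun i => D.mulVec x i + c i) f
          = (∑ i, b i * x i ^ 2) + b0 := by
  obtain ⟨n, hn, hdvdC, hdvdA⟩ : ∃ n : ℤ, 0 < n ∧ (∀ i j, ((C i j).den : ℤ) ∣ n)
      ∧ ∀ i, ((a' i).den : ℤ) ∣ n := by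
    refine ⟨(∏ i, ∏ j, ((C i j).den : ℤ)) * ∏ i, ((a' i).den : ℤ), ?_, ?_, ?_⟩
    · apply mul_pos
      · exact Finset.prod_pos fun i _ => Finset.prod_pos fun j _ => by
          exact_mod_cast (C i j).pos
      · exact Finset.prod_pos fun i _ => by exact_mod_cast (a' i).pos
    · exact fun i j => dvd_mul_of_dvd_left
        ((Finset.dvd_prod_of_mem _ (Finset.mem_univ j)).trans
          (Finset.dvd_prod_of_mem (fun i => ∏ j, ((C i j).den : ℤ)) (Finset.mem_univ i))) _
    · exact fun i => dvd_mul_of_dvd_right (Finset.dvd_prod_of_mem _ (Finset.mem_univ i)) _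
  set D : Matrix (Fin k) (Fin k) ℤ :=
    fun i j => n / ((C i j).den : ℤ) * (C i j).num with hD
  have hb : ∀ i, ((n * (n / ((a' i).den : ℤ) * (a' i).num) : ℤ) : ℚ)
      = (n : ℚ) ^ 2 * a' i := fun i => by
    rw [Int.cast_mul, clear_den _ (hdvdA i)]; ring
  refine ⟨D, fun i => n * (n / ((a' i).den : ℤ) * (a' i).num), a0, ?_, ?_⟩
  · have hmap : D.map (⇑(Int.castRingHom ℚ)) = (n : ℚ) • C := by
      ext i j
      simp only [Matrix.map_apply, Matrix.smul_apply, smul_eq_mul, hD]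
      exact clear_den _ (hdvdC i j)
    have h1 := RingHom.map_det (Int.castRingHom ℚ) D
    rw [RingHom.mapMatrix_apply, hmap, Matrix.det_smul, Fintype.card_fin] at h1
    intro h
    rw [h] at h1
    simp only [map_zero] at h1
    rcases mul_eq_zero.mp h1.symm with h' | h'
    · exact absurd h' (pow_ne_zero _ (by exact_mod_cast hn.ne'))
    · exact hC h'
  · intro x
    have key : ∀ i, ((D.mulVec x i : ℤ) : ℚ) = C.mulVec (fun j => (n : ℚ) * x j) i := by
      intro i
      simp only [Matrix.mulVec, dotProduct]
      push_cast
      refine Finset.sum_congr rfl fun j _ => ?_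
      rw [show ((D i j : ℤ) : ℚ) = (n : ℚ) * C i j from clear_den _ (hdvdC i j)]
      ring
    have h2 := hf (fun j => (n : ℚ) * x j)
    have harg : (fun i => ((D.mulVec x i + c i : ℤ) : ℚ))
        = fun i => C.mulVec (fun j => (n : ℚ) * x j) i + (c i : ℚ) :=
      funext fun i => by push_cast; rw [key]
    have h3 : ((MvPolynomial.eval (fun i => D.mulVec x i + c i) f : ℤ) : ℚ)
        = (∑ i, a' i * ((n : ℚ) * x i) ^ 2) + (a0 : ℚ) := by
      rw [cast_eval, harg, h2]
    apply (Int.cast_injective (α := ℚ))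
    rw [h3, Int.cast_add, Int.cast_sum]
    congr 1
    refine Finset.sum_congr rfl fun i _ => ?_
    rw [Int.cast_mul, hb i]
    push_cast
    ring
end

section
/- There exist positive constants c_1 and c_2 such that for every integer N ≥ 2 the number R(N) of integer triples (x_1, x_2, x_3) with |x_1| ≤ N, |x_2| ≤ N, |x_3| ≤ N satisfying x_1^2 + x_2^2 − x_3^2 = 0 satisfies c_1·N ≤ R(N) ≤ c_2·N·ln N. -/
/-!
The lower bound comes from the solutions `(0, a, a)`. For the upper bound, Euclid's
parametrization shows that, up to the signs of the coordinates and the order of the legs, every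
nonzero solution is `(g (u² - v²), 2guv, g (u² + v²))` with natural numbers `g, u ≥ 1` and
`v ≤ u`, and `|x₃| ≤ N` forces `g u² ≤ N`. For fixed `u` there are at most
`(u + 1) ⌊N / u²⌋ ≤ 2N / u` pairs `(g, v)`, so there are at most `2N H_N = O(N log N)` parameters.
-/

open Finset

theorem exists_nat_params_of_int_params (k m n : ℤ) :
    ∃ g u v : ℕ, v ≤ u ∧
      |k * (m ^ 2 - n ^ 2)| = g * ((u : ℤ) ^ 2 - v ^ 2) ∧
      |k * (2 * m * n)| = 2 * g * u * v ∧
      |k * (m ^ 2 + n ^ 2)| = g * ((u : ℤ) ^ 2 + v ^ 2) := by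
  wlog h : n.natAbs ≤ m.natAbs generalizing m n
  · obtain ⟨g, u, v, hvu, h₁, h₂, h₃⟩ := this n m (le_of_not_ge h)
    refine ⟨g, u, v, hvu, ?_, ?_, ?_⟩
    · rw [← h₁, ← abs_neg]; ring_nf
    · rw [← h₂]; ring_nf
    · rw [← h₃]; ring_nf
  have hsq : n ^ 2 ≤ m ^ 2 := Int.natAbs_le_iff_sq_le.1 h
  refine ⟨k.natAbs, m.natAbs, n.natAbs, h, ?_, ?_, ?_⟩ <;>
    simp only [Int.natCast_natAbs, sq_abs, abs_mul]
  · rw [abs_of_nonneg (sub_nonneg.2 hsq)]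
  · rw [abs_of_nonneg (by norm_num : (0:ℤ) ≤ 2)]; ring
  · rw [abs_of_nonneg (by positivity : (0:ℤ) ≤ m ^ 2 + n ^ 2)]

theorem PythagoreanTriple.exists_abs_eq {a b c : ℤ} (h : PythagoreanTriple a b c) :
    ∃ g u v : ℕ, v ≤ u ∧ |c| = g * ((u : ℤ) ^ 2 + v ^ 2) ∧
      (|a| = g * ((u : ℤ) ^ 2 - v ^ 2) ∧ |b| = 2 * g * u * v ∨
        |a| = 2 * g * u * v ∧ |b| = g * ((u : ℤ) ^ 2 - v ^ 2)) := by
  obtain ⟨k, m, n, hab, hc⟩ := PythagoreanTriple.classification.1 h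
  obtain ⟨g, u, v, hvu, h₁, h₂, h₃⟩ := exists_nat_params_of_int_params k m n
  refine ⟨g, u, v, hvu, ?_, ?_⟩
  · rcases hc with rfl | rfl
    · exact h₃
    · rw [neg_mul, abs_neg, h₃]
  · rcases hab with ⟨rfl, rfl⟩ | ⟨rfl, rfl⟩
    · exact .inl ⟨h₁, h₂⟩
    · exact .inr ⟨h₂, h₁⟩

def pythagoreanSolutions (N : ℕ) : Set (Fin 3 → ℤ) :=
  {x | (∀ i, |x i| ≤ (N : ℤ)) ∧ x 0 ^ 2 + x 1 ^ 2 - x 2 ^ 2 = 0}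

def pythagoreanParams (N : ℕ) : Finset (ℕ × ℕ × ℕ) :=
  (Icc 1 N).biUnion fun u => (Icc 1 (N / u ^ 2) ×ˢ range (u + 1)).image fun p => (p.1, u, p.2)

theorem mem_pythagoreanParams {N g u v : ℕ} (hg : 1 ≤ g) (hu : 1 ≤ u) (hvu : v ≤ u)
    (hN : g * u ^ 2 ≤ N) : (g, u, v) ∈ pythagoreanParams N := by
  have huN : u ≤ N := calc
    u ≤ g * u ^ 2 := by nlinarith
    _ ≤ N := hN
  have hgN : g ≤ N / u ^ 2 := (Nat.le_div_iff_mul_le (by positivity)).2 hN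
  exact mem_biUnion.2 ⟨u, mem_Icc.2 ⟨hu, huN⟩,
    mem_image.2 ⟨(g, v), mem_product.2 ⟨mem_Icc.2 ⟨hg, hgN⟩, mem_range.2 (by omega)⟩, rfl⟩⟩

theorem card_pythagoreanParams_le (N : ℕ) :
    ((pythagoreanParams N).card : ℝ) ≤ 2 * N * (1 + Real.log N) := by
  have hfiber : ∀ u ∈ Icc 1 N, (((u + 1) * (N / u ^ 2) : ℕ) : ℝ) ≤ 2 * N * (u : ℝ)⁻¹ := by
    intro u hu
    have hu : (1 : ℝ) ≤ u := by exact_mod_cast (mem_Icc.1 hu).1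
    calc (((u + 1) * (N / u ^ 2) : ℕ) : ℝ) ≤ (u + 1) * (N / u ^ 2) := by
          push_cast
          gcongr
          exact_mod_cast Nat.cast_div_le
      _ ≤ 2 * u * (N / u ^ 2) := by gcongr; linarith
      _ = 2 * N * (u : ℝ)⁻¹ := by field_simp
  calc ((pythagoreanParams N).card : ℝ)
      ≤ ∑ u ∈ Icc 1 N, (((u + 1) * (N / u ^ 2) : ℕ) : ℝ) := by
        rw [← Nat.cast_sum]
        gcongr
        refine card_biUnion_le.trans (sum_le_sum fun u _ => card_image_le.trans ?_)
        rw [card_product, Nat.card_Icc, card_range, Nat.add_sub_cancel, mul_comm]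
    _ ≤ ∑ u ∈ Icc 1 N, 2 * N * (u : ℝ)⁻¹ := sum_le_sum hfiber
    _ = 2 * N * harmonic N := by
        rw [← mul_sum, harmonic_eq_sum_Icc]
        push_cast
        rfl
    _ ≤ 2 * N * (1 + Real.log N) := by gcongr; exact harmonic_le_one_add_log N

def pythagoreanVector : Bool × ℕ × ℕ × ℕ → Fin 3 → ℤ
  | (true, g, u, v) => ![g * ((u : ℤ) ^ 2 - v ^ 2), 2 * g * u * v, g * ((u : ℤ) ^ 2 + v ^ 2)]
  | (false, g, u, v) => ![2 * g * u * v, g * ((u : ℤ) ^ 2 - v ^ 2), g * ((u : ℤ) ^ 2 + v ^ 2)]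

theorem abs_mem_pythagoreanVector_image {N : ℕ} {x : Fin 3 → ℤ}
    (hx : x ∈ pythagoreanSolutions N) :
    (fun i => |x i|) ∈ insert 0 ((univ ×ˢ pythagoreanParams N).image pythagoreanVector) := by
  obtain ⟨hbound, heq⟩ := hx
  have htriple : PythagoreanTriple (x 0) (x 1) (x 2) := by
    unfold PythagoreanTriple; linear_combination heq
  obtain ⟨g, u, v, hvu, hc, hab⟩ := htriple.exists_abs_eq
  by_cases hdeg : g = 0 ∨ u = 0
  · refine mem_insert.2 (.inl ?_)
    have hv : u = 0 → v = 0 := by omega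
    funext i
    fin_cases i <;> rcases hdeg with rfl | rfl <;> simp_all
  rw [not_or] at hdeg
  have hN : g * u ^ 2 ≤ N := by
    have : (g : ℤ) * (u ^ 2 + v ^ 2) ≤ N := hc ▸ hbound 2
    have : g * (u ^ 2 + v ^ 2) ≤ N := by exact_mod_cast this
    nlinarith
  have hparams := mem_pythagoreanParams (Nat.one_le_iff_ne_zero.2 hdeg.1)
    (Nat.one_le_iff_ne_zero.2 hdeg.2) hvu hN
  refine mem_insert_of_mem (mem_image.2 ?_)
  rcases hab with ⟨ha, hb⟩ | ⟨ha, hb⟩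
  · refine ⟨(true, g, u, v), mem_product.2 ⟨mem_univ _, hparams⟩, ?_⟩
    funext i; fin_cases i <;> simp [pythagoreanVector, ha, hb, hc]
  · refine ⟨(false, g, u, v), mem_product.2 ⟨mem_univ _, hparams⟩, ?_⟩
    funext i; fin_cases i <;> simp [pythagoreanVector, ha, hb, hc]

def signVectors : Finset (Fin 3 → ℤ) :=
  Fintype.piFinset fun _ => {-1, 0, 1}

theorem pythagoreanSolutions_subset (N : ℕ) :
    pythagoreanSolutions N ⊆ image₂ (· * ·) signVectors
      (insert 0 ((univ ×ˢ pythagoreanParams N).image pythagoreanVector)) := by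
  intro x hx
  refine mem_image₂.2 ⟨fun i => (x i).sign, ?_, fun i => |x i|,
    abs_mem_pythagoreanVector_image hx, funext fun i => Int.sign_mul_abs (x i)⟩
  refine Fintype.mem_piFinset.2 fun i => ?_
  rcases (x i).sign_trichotomy with h | h | h <;> simp [h]

theorem finite_pythagoreanSolutions (N : ℕ) : (pythagoreanSolutions N).Finite :=
  (Finset.finite_toSet _).subset (pythagoreanSolutions_subset N)

theorem le_ncard_pythagoreanSolutions (N : ℕ) :
    N + 1 ≤ (pythagoreanSolutions N).ncard := by
  have hmaps : ∀ a ∈ (range (N + 1) : Set ℕ), ![0, (a : ℤ), a] ∈ pythagoreanSolutions N := by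
    intro a ha
    have ha : a ≤ N := by simpa [Nat.lt_succ_iff] using ha
    refine ⟨fun i => ?_, by simp⟩
    fin_cases i <;> simp [ha]
  have hinj : Set.InjOn (fun a : ℕ => ![0, (a : ℤ), a]) (range (N + 1)) := by
    intro a _ b _ hab
    simpa using congrFun hab 1
  simpa using Set.ncard_le_ncard_of_injOn _ hmaps hinj (finite_pythagoreanSolutions N)

theorem ncard_pythagoreanSolutions_le (N : ℕ) :
    ((pythagoreanSolutions N).ncard : ℝ) ≤ 27 * (1 + 4 * N * (1 + Real.log N)) := by
  have hcard : (pythagoreanSolutions N).ncard ≤ 27 * (1 + 2 * (pythagoreanParams N).card) := calc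
    (pythagoreanSolutions N).ncard ≤ (image₂ (· * ·) signVectors
        (insert 0 ((univ ×ˢ pythagoreanParams N).image pythagoreanVector))).card := by
      rw [← Set.ncard_coe_finset]
      exact Set.ncard_le_ncard (pythagoreanSolutions_subset N)
    _ ≤ signVectors.card * (1 + (univ ×ˢ pythagoreanParams N).card) := by
      refine card_image₂_le _ _ _ |>.trans (Nat.mul_le_mul_left _ ?_)
      exact (card_insert_le _ _).trans (by rw [add_comm]; gcongr; exact card_image_le)
    _ = 27 * (1 + 2 * (pythagoreanParams N).card) := by
      simp [signVectors, card_product]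
  have hparams := card_pythagoreanParams_le N
  have : ((pythagoreanSolutions N).ncard : ℝ) ≤ 27 * (1 + 2 * (pythagoreanParams N).card) := by
    exact_mod_cast hcard
  linarith

/-- There are positive constants `c_1, c_2` such that for every integer `N ≥ 2` the
number `R(N)` of integer triples `(x_1, x_2, x_3)` in the cube `[-N, N]^3` with
`x_1^2 + x_2^2 - x_3^2 = 0` satisfies `c_1 N ≤ R(N) ≤ c_2 N ln N`. -/
theorem stmt_19 :
    ∃ c₁ c₂ : ℝ, 0 < c₁ ∧ 0 < c₂ ∧ ∀ N : ℕ, 2 ≤ N →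
      c₁ * (N : ℝ) ≤
        (Set.ncard {x : Fin 3 → ℤ |
          (∀ i, |x i| ≤ (N : ℤ)) ∧ x 0 ^ 2 + x 1 ^ 2 - x 2 ^ 2 = 0} : ℝ) ∧
      (Set.ncard {x : Fin 3 → ℤ |
          (∀ i, |x i| ≤ (N : ℤ)) ∧ x 0 ^ 2 + x 1 ^ 2 - x 2 ^ 2 = 0} : ℝ)
        ≤ c₂ * (N : ℝ) * Real.log (N : ℝ) := by
  refine ⟨1, 378, one_pos, by norm_num, fun N hN => ⟨?_, ?_⟩⟩
  · have hlower : N ≤ (pythagoreanSolutions N).ncard :=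
      N.le_succ.trans (le_ncard_pythagoreanSolutions N)
    rw [one_mul]
    exact_mod_cast hlower
  · have hN : (2 : ℝ) ≤ N := by exact_mod_cast hN
    have hlog : 1 / 2 < Real.log N :=
      (by linarith [Real.log_two_gt_d9] : 1 / 2 < Real.log 2).trans_le (Real.log_le_log two_pos hN)
    have hNlog : 1 < N * Real.log N := by nlinarith
    refine (ncard_pythagoreanSolutions_le N).trans ?_
    nlinarith
end
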